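/- arXiv:2502.16997 — 6 statements merged into one kernel-verified Lean document; each statement's English description precedes it below -/
import Mathlib

section
/- Let 𝒦 be an integral connectivity structure on a finite nonempty set I, and let σ = {J₁, J₂} be a dissociation of a subset J ⊆ I. Then the following are equivalent: (i) 𝒦 respects σ; (ii) 𝒦 ∩ 𝒫(J) = (𝒦 ∩ 𝒫(J₁)) ∪ (𝒦 ∩ 𝒫(J₂)); (iii) the set of irreducible connected sets included in J equals the union of those included in J₁ and those included in J₂; (iv) the set 𝒦̃ of irreducible members of 𝒦 of cardinality ≥ 2 respects σ. -/
universe u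

variable {I : Type u}

/-- `{J₁, J₂}` is a dissociation of `J ⊆ I`: an (unordered) pair of nonempty
disjoint subsets whose union is `J`. -/
def IsDissociation (J J1 J2 : Set I) : Prop :=
  J1.Nonempty ∧ J2.Nonempty ∧ Disjoint J1 J2 ∧ J1 ∪ J2 = J

/-- `A` contests the dissociation `{J₁, J₂}`. -/
def Contests (A J1 J2 : Set I) : Prop :=
  A ⊆ J1 ∪ J2 ∧ (A ∩ J1).Nonempty ∧ (A ∩ J2).Nonempty

/-- An integral connectivity structure on `I`. -/
def IsConnectivity (𝒦 : Set (Set I)) : Prop :=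
  ∅ ∈ 𝒦 ∧ (∀ i : I, ({i} : Set I) ∈ 𝒦) ∧
    ∀ K L : Set I, K ∈ 𝒦 → L ∈ 𝒦 → (K ∩ L).Nonempty → K ∪ L ∈ 𝒦

/-- The integral connectivity structure generated by `𝒜`. -/
def generated (𝒜 : Set (Set I)) : Set (Set I) :=
  ⋂₀ {𝒦 : Set (Set I) | IsConnectivity 𝒦 ∧ 𝒜 ⊆ 𝒦}

/-- The set `𝒦̃` of irreducible members of `𝒦` with at least two elements. -/
def irred (𝒦 : Set (Set I)) : Set (Set I) :=
  {K | K ∈ 𝒦 ∧ K ∉ generated (𝒦 \ {K}) ∧ 2 ≤ K.ncard}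

/-- The sum of two integral connectivity structures: `𝒦₁ ⊕ 𝒦₂ = [𝒦₁ ∪ 𝒦₂]`. -/
def csum (𝒦₁ 𝒦₂ : Set (Set I)) : Set (Set I) := generated (𝒦₁ ∪ 𝒦₂)

/-- The discrete integral connectivity structure on `I`. -/
def discreteStructure (I : Type u) : Set (Set I) :=
  {(∅ : Set I)} ∪ {A : Set I | ∃ i : I, A = {i}}

/-- `C` is a connected component of `(I, 𝒦)`: a maximal member of `𝒦`. -/
def IsComponent (𝒦 : Set (Set I)) (C : Set I) : Prop :=
  C ∈ 𝒦 ∧ ∀ K ∈ 𝒦, C ⊆ K → K = C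

/-- `Γ_𝒜`: subsets of `I` all of whose dissociations are contested by a member of `𝒜`. -/
def Gamma (𝒜 : Set (Set I)) : Set (Set I) :=
  {B | ∀ J1 J2 : Set I, IsDissociation B J1 J2 → ∃ A ∈ 𝒜, Contests A J1 J2}

/-- A random family on `I`: a finite probability space together with finitely
valued random variables indexed by `I`. -/
structure RandomFamily (I : Type u) where
  Ω : Type
  [fintΩ : Fintype Ω]
  P : Ω → ℝ
  P_nonneg : ∀ ω, 0 ≤ P ω
  P_total : ∑ ω, P ω = 1
  R : I → Type
  [fintR : ∀ i, Fintype (R i)]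
  X : ∀ i, Ω → R i

attribute [instance] RandomFamily.fintΩ RandomFamily.fintR

/-- Probability of an event. -/
noncomputable def RandomFamily.prob (φ : RandomFamily I) (E : Set φ.Ω) : ℝ :=
  ∑ ω, E.indicator φ.P ω

/-- `P(X_J = x_J)`. -/
noncomputable def RandomFamily.probEq (φ : RandomFamily I) (J : Set I)
    (x : ∀ i, φ.R i) : ℝ :=
  φ.prob {ω | ∀ j ∈ J, φ.X j ω = x j}

/-- `φ` respects the dissociation `{J₁, J₂}`:
`P(X_{J₁∪J₂} = x) = P(X_{J₁} = x) · P(X_{J₂} = x)` for all tuples of values. -/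
def RandomFamily.Respects (φ : RandomFamily I) (J1 J2 : Set I) : Prop :=
  ∀ x : ∀ i, φ.R i, φ.probEq (J1 ∪ J2) x = φ.probEq J1 x * φ.probEq J2 x

/-- The connectivity structure `K_φ` of a random family: the subsets `J ⊆ I`
such that `φ` contests every dissociation of `J`. -/
def RandomFamily.Kconn (φ : RandomFamily I) : Set (Set I) :=
  {J | ∀ J1 J2 : Set I, IsDissociation J J1 J2 → ¬ φ.Respects J1 J2}

/-- Tensor product of two random families. -/
noncomputable def RandomFamily.tensor (φ ψ : RandomFamily I) : RandomFamily I where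
  Ω := φ.Ω × ψ.Ω
  fintΩ := inferInstance
  P := fun p => φ.P p.1 * ψ.P p.2
  P_nonneg := fun p => mul_nonneg (φ.P_nonneg _) (ψ.P_nonneg _)
  P_total := by
    rw [Fintype.sum_prod_type]
    simp only [← Finset.mul_sum]
    rw [ψ.P_total]
    simp only [mul_one]
    exact φ.P_total
  R := fun i => φ.R i × ψ.R i
  fintR := fun i => inferInstance
  X := fun i p => (φ.X i p.1, ψ.X i p.2)

/-- Restriction of a random family to a subset `J ⊆ I`. -/
def RandomFamily.restrict (φ : RandomFamily I) (J : Set I) : RandomFamily J where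
  Ω := φ.Ω
  fintΩ := inferInstance
  P := φ.P
  P_nonneg := φ.P_nonneg
  P_total := φ.P_total
  R := fun j => φ.R (j : I)
  fintR := fun j => inferInstance
  X := fun j => φ.X (j : I)

/-- The canonical `M`-brunnian family on `I`, for `M` of cardinality `m`
(with elements listed in increasing order). -/
noncomputable def brunnian [LinearOrder I] (M : Finset I) (m : ℕ) (h : M.card = m) :
    RandomFamily I where
  Ω := Fin (m - 1) → ZMod 2
  fintΩ := inferInstance
  P := fun _ => ((2 : ℝ) ^ (m - 1))⁻¹
  P_nonneg := fun _ => by positivity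
  P_total := by
    have hcard : Fintype.card (Fin (m - 1) → ZMod 2) = 2 ^ (m - 1) := by
      rw [Fintype.card_fun]
      simp
    rw [Finset.sum_const, Finset.card_univ, hcard, nsmul_eq_mul]
    push_cast
    exact mul_inv_cancel₀ (by positivity)
  R := fun _ => ZMod 2
  fintR := fun _ => inferInstance
  X := fun i ω =>
    if hi : i ∈ M then
      if hk : (((M.orderIsoOfFin h).symm ⟨i, hi⟩ : Fin m) : ℕ) < m - 1 then
        ω ⟨_, hk⟩
      else ∑ j, ω j
    else 0
lemma mem_generated' {𝒜 : Set (Set I)} {K : Set I} :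
    K ∈ generated 𝒜 ↔ ∀ 𝒦 : Set (Set I), IsConnectivity 𝒦 → 𝒜 ⊆ 𝒦 → K ∈ 𝒦 := by
  constructor
  · intro h 𝒦 h1 h2; exact h 𝒦 ⟨h1, h2⟩
  · intro h 𝒦 h𝒦; exact h 𝒦 h𝒦.1 h𝒦.2

lemma isConnectivity_generated' (𝒜 : Set (Set I)) : IsConnectivity (generated 𝒜) := by
  refine ⟨?_, fun i => ?_, fun K L hK hL hKL => ?_⟩
  · exact mem_generated'.2 fun 𝒦 h _ => h.1
  · exact mem_generated'.2 fun 𝒦 h _ => h.2.1 i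
  · exact mem_generated'.2 fun 𝒦 h h𝒜 =>
      h.2.2 K L (mem_generated'.1 hK 𝒦 h h𝒜) (mem_generated'.1 hL 𝒦 h h𝒜) hKL

lemma subset_generated' (𝒜 : Set (Set I)) : 𝒜 ⊆ generated 𝒜 :=
  fun A hA => mem_generated'.2 fun _ _ h𝒜 => h𝒜 hA

lemma generated_min' {𝒜 𝒦 : Set (Set I)} (h : IsConnectivity 𝒦) (h2 : 𝒜 ⊆ 𝒦) :
    generated 𝒜 ⊆ 𝒦 := fun _ hK => mem_generated'.1 hK 𝒦 h h2

lemma generated_mono' {𝒜 ℬ : Set (Set I)} (h : 𝒜 ⊆ ℬ) : generated 𝒜 ⊆ generated ℬ :=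
  generated_min' (isConnectivity_generated' ℬ) (h.trans (subset_generated' ℬ))

lemma generated_localize' {𝒜 : Set (Set I)} {K S : Set I}
    (hK : K ∈ generated 𝒜) (hKS : K ⊆ S) : K ∈ generated (𝒜 ∩ Set.powerset S) := by
  have hM : IsConnectivity {A : Set I | A ⊆ S → A ∈ generated (𝒜 ∩ Set.powerset S)} := by
    refine ⟨fun _ => (isConnectivity_generated' _).1,
      fun i _ => (isConnectivity_generated' _).2.1 i, ?_⟩
    intro A B hA hB hAB hsub
    exact (isConnectivity_generated' _).2.2 A B
      (hA ((Set.subset_union_left).trans hsub)) (hB ((Set.subset_union_right).trans hsub)) hAB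
  have h𝒜 : 𝒜 ⊆ {A : Set I | A ⊆ S → A ∈ generated (𝒜 ∩ Set.powerset S)} :=
    fun A hA hAS => subset_generated' _ ⟨hA, hAS⟩
  exact mem_generated'.1 hK _ hM h𝒜 hKS

lemma respect_cases' {A J1 J2 : Set I} (h : ¬ Contests A J1 J2) (hsub : A ⊆ J1 ∪ J2) :
    A ⊆ J1 ∨ A ⊆ J2 := by
  by_contra hc
  push_neg at hc
  obtain ⟨a, haA, ha1⟩ := Set.not_subset.1 hc.1
  obtain ⟨b, hbA, hb2⟩ := Set.not_subset.1 hc.2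
  exact h ⟨hsub, ⟨b, hbA, (hsub hbA).resolve_right hb2⟩, ⟨a, haA, (hsub haA).resolve_left ha1⟩⟩

lemma isConnectivity_respect' {J1 J2 : Set I} (hd : Disjoint J1 J2) :
    IsConnectivity {A : Set I | ¬ Contests A J1 J2} := by
  refine ⟨?_, ?_, ?_⟩
  · rintro ⟨-, h, -⟩; simp at h
  · rintro i ⟨-, ⟨x, hx, hx1⟩, ⟨y, hy, hy2⟩⟩
    simp only [Set.mem_singleton_iff] at hx hy
    exact Set.disjoint_left.mp hd (hx ▸ hx1) (hy ▸ hy2)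
  · intro K L hK hL hKL hc
    obtain ⟨hsub, h1, h2⟩ := hc
    obtain ⟨x, hxK, hxL⟩ := hKL
    rcases respect_cases' hK ((Set.subset_union_left).trans hsub) with hK1 | hK2 <;>
      rcases respect_cases' hL ((Set.subset_union_right).trans hsub) with hL1 | hL2
    · obtain ⟨b, hb, hb2⟩ := h2
      rcases hb with hb | hb
      · exact Set.disjoint_left.mp hd (hK1 hb) hb2
      · exact Set.disjoint_left.mp hd (hL1 hb) hb2
    · exact Set.disjoint_left.mp hd (hK1 hxK) (hL2 hxL)
    · exact Set.disjoint_left.mp hd (hL1 hxL) (hK2 hxK)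
    · obtain ⟨a, ha, ha1⟩ := h1
      rcases ha with ha | ha
      · exact Set.disjoint_left.mp hd ha1 (hK2 ha)
      · exact Set.disjoint_left.mp hd ha1 (hL2 ha)

lemma subset_generated_irred' [Fintype I] {𝒦 : Set (Set I)} (h : IsConnectivity 𝒦) :
    𝒦 ⊆ generated (irred 𝒦) := by
  have main : ∀ n, ∀ K : Set I, K.ncard ≤ n → K ∈ 𝒦 → K ∈ generated (irred 𝒦) := by
    intro n
    induction n with
    | zero =>
      intro K hn hK
      have : K = ∅ := (Set.ncard_eq_zero (Set.toFinite K)).1 (Nat.le_zero.1 hn)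
      rw [this]; exact (isConnectivity_generated' _).1
    | succ n ih =>
      intro K hn hK
      by_cases hcard : K.ncard ≤ 1
      · rcases Set.eq_empty_or_nonempty K with rfl | hne
        · exact (isConnectivity_generated' _).1
        · have h1 : K.ncard = 1 := le_antisymm hcard ((Set.ncard_pos (Set.toFinite K)).2 hne)
          obtain ⟨a, rfl⟩ := Set.ncard_eq_one.1 h1
          exact (isConnectivity_generated' _).2.1 a
      · push_neg at hcard
        by_cases hg : K ∈ generated (𝒦 \ {K})
        · have hloc := generated_localize' hg (Set.Subset.refl K)
          have hsub : (𝒦 \ {K}) ∩ Set.powerset K ⊆ generated (irred 𝒦) := by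
            rintro L ⟨⟨hL𝒦, hLne⟩, hLK⟩
            have hLK' : L ⊆ K := hLK
            have hlt : L.ncard < K.ncard :=
              Set.ncard_lt_ncard (hLK'.ssubset_of_ne (by simpa using hLne)) (Set.toFinite K)
            exact ih L (by omega) hL𝒦
          exact generated_min' (isConnectivity_generated' _) hsub hloc
        · exact subset_generated' _ ⟨hK, hg, hcard⟩
  exact fun K hK => main K.ncard K le_rfl hK

/-- for a dissociation `σ = {J₁, J₂}` of `J ⊆ I`, the following are
equivalent: (i) `𝒦` respects `σ`; (ii) `𝒦 ∩ 𝒫J = (𝒦 ∩ 𝒫J₁) ∪ (𝒦 ∩ 𝒫J₂)`;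
(iii) `𝒦̃_J = 𝒦̃_{J₁} ∪ 𝒦̃_{J₂}`; (iv) `𝒦̃` respects `σ`. -/
theorem stmt2 {I : Type u} [Fintype I] [Nonempty I] (𝒦 : Set (Set I))
    (h𝒦 : IsConnectivity 𝒦) (J J1 J2 : Set I) (hσ : IsDissociation J J1 J2) :
    ((∀ K ∈ 𝒦, ¬ Contests K J1 J2) ↔
        𝒦 ∩ Set.powerset J = (𝒦 ∩ Set.powerset J1) ∪ (𝒦 ∩ Set.powerset J2)) ∧
    ((𝒦 ∩ Set.powerset J = (𝒦 ∩ Set.powerset J1) ∪ (𝒦 ∩ Set.powerset J2)) ↔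
        irred (𝒦 ∩ Set.powerset J)
          = irred (𝒦 ∩ Set.powerset J1) ∪ irred (𝒦 ∩ Set.powerset J2)) ∧
    ((irred (𝒦 ∩ Set.powerset J)
          = irred (𝒦 ∩ Set.powerset J1) ∪ irred (𝒦 ∩ Set.powerset J2)) ↔
        ∀ K ∈ irred 𝒦, ¬ Contests K J1 J2) := by
  obtain ⟨hne1, hne2, hd, hunion⟩ := hσ
  have hJ1J : J1 ⊆ J := hunion ▸ Set.subset_union_left
  have hJ2J : J2 ⊆ J := hunion ▸ Set.subset_union_right
  have hP1 : 𝒦 ∩ Set.powerset J1 ⊆ 𝒦 ∩ Set.powerset J :=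
    fun K hK => ⟨hK.1, Set.Subset.trans hK.2 hJ1J⟩
  have hP2 : 𝒦 ∩ Set.powerset J2 ⊆ 𝒦 ∩ Set.powerset J :=
    fun K hK => ⟨hK.1, Set.Subset.trans hK.2 hJ2J⟩
  -- (i) → (ii)
  have h12 : (∀ K ∈ 𝒦, ¬ Contests K J1 J2) →
      𝒦 ∩ Set.powerset J = (𝒦 ∩ Set.powerset J1) ∪ (𝒦 ∩ Set.powerset J2) := by
    intro hi
    apply Set.Subset.antisymm
    · rintro K ⟨hK, hKJ⟩
      have hsub : K ⊆ J1 ∪ J2 := hunion ▸ hKJ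
      rcases respect_cases' (hi K hK) hsub with h | h
      · exact Or.inl ⟨hK, h⟩
      · exact Or.inr ⟨hK, h⟩
    · exact Set.union_subset hP1 hP2
  -- (ii) → (iii)
  have h23 : 𝒦 ∩ Set.powerset J = (𝒦 ∩ Set.powerset J1) ∪ (𝒦 ∩ Set.powerset J2) →
      irred (𝒦 ∩ Set.powerset J)
        = irred (𝒦 ∩ Set.powerset J1) ∪ irred (𝒦 ∩ Set.powerset J2) := by
    intro hii
    apply Set.Subset.antisymm
    · rintro K ⟨hKmem, hKirr, hK2⟩
      rw [hii] at hKmem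
      rcases hKmem with h | h
      · refine Or.inl ⟨h, fun hc => hKirr ?_, hK2⟩
        exact generated_mono' (Set.diff_subset_diff_left hP1) hc
      · refine Or.inr ⟨h, fun hc => hKirr ?_, hK2⟩
        exact generated_mono' (Set.diff_subset_diff_left hP2) hc
    · have key : ∀ J' : Set I, J' ⊆ J →
          irred (𝒦 ∩ Set.powerset J') ⊆ irred (𝒦 ∩ Set.powerset J) := by
        rintro J' hJ' K ⟨hKmem, hKirr, hK2⟩
        refine ⟨⟨hKmem.1, Set.Subset.trans hKmem.2 hJ'⟩, fun hc => hKirr ?_, hK2⟩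
        have hKJ' : K ⊆ J' := hKmem.2
        have hloc := generated_localize' hc hKJ'
        have heq : (((𝒦 ∩ Set.powerset J) \ {K}) ∩ Set.powerset J')
            = ((𝒦 ∩ Set.powerset J') \ {K}) := by
          ext L
          constructor
          · rintro ⟨⟨⟨hL𝒦, _⟩, hLne⟩, hLJ'⟩; exact ⟨⟨hL𝒦, hLJ'⟩, hLne⟩
          · rintro ⟨⟨hL𝒦, hLJ'⟩, hLne⟩
            exact ⟨⟨⟨hL𝒦, Set.Subset.trans hLJ' hJ'⟩, hLne⟩, hLJ'⟩
        rwa [heq] at hloc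
      exact Set.union_subset (key J1 hJ1J) (key J2 hJ2J)
  -- (iii) → (iv)
  have h34 : irred (𝒦 ∩ Set.powerset J)
        = irred (𝒦 ∩ Set.powerset J1) ∪ irred (𝒦 ∩ Set.powerset J2) →
      ∀ K ∈ irred 𝒦, ¬ Contests K J1 J2 := by
    rintro hiii K hKirr ⟨hsub, ⟨a, haK, ha1⟩, ⟨b, hbK, hb2⟩⟩
    have hKJ : K ⊆ J := hunion ▸ hsub
    have hmem : K ∈ irred (𝒦 ∩ Set.powerset J) := by
      refine ⟨⟨hKirr.1, hKJ⟩, fun hc => hKirr.2.1 ?_, hKirr.2.2⟩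
      exact generated_mono' (Set.diff_subset_diff_left (Set.inter_subset_left)) hc
    rw [hiii] at hmem
    rcases hmem with ⟨⟨_, hK1⟩, _, _⟩ | ⟨⟨_, hK2⟩, _, _⟩
    · exact Set.disjoint_left.mp hd (hK1 hbK) hb2
    · exact Set.disjoint_left.mp hd ha1 (hK2 haK)
  -- (iv) → (i)
  have h41 : (∀ K ∈ irred 𝒦, ¬ Contests K J1 J2) → ∀ K ∈ 𝒦, ¬ Contests K J1 J2 := by
    intro hiv K hK
    exact mem_generated'.1 (subset_generated_irred' h𝒦 hK) _
      (isConnectivity_respect' hd) (fun A hA => hiv A hA)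
  exact ⟨⟨h12, fun h2 => h41 (h34 (h23 h2))⟩,
    ⟨h23, fun h3 => h12 (h41 (h34 h3))⟩,
    ⟨h34, fun h4 => h23 (h12 (h41 h4))⟩⟩
end

section
/- For every integral connectivity structure 𝒦 on a finite nonempty set I, one has Γ_𝒦 = 𝒦; that is, a subset B ⊆ I belongs to 𝒦 if and only if every dissociation of B is contested by some member of 𝒦. -/
universe u

variable {I : Type u}

theorem IsDissociation.contests_self {J J1 J2 : Set I} (h : IsDissociation J J1 J2) :
    Contests J J1 J2 := by
  obtain ⟨⟨x, hx⟩, ⟨y, hy⟩, -, rfl⟩ := h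
  exact ⟨subset_rfl, ⟨x, Or.inl hx, hx⟩, ⟨y, Or.inr hy, hy⟩⟩

theorem subset_gamma (𝒜 : Set (Set I)) : 𝒜 ⊆ Gamma 𝒜 :=
  fun B hB _ _ h => ⟨B, hB, h.contests_self⟩

/-- A member of `𝒦` contesting the dissociation `{C, B \ C}` meets `C`, so its union with `C`
is a larger member of `𝒦` inside `B`. -/
theorem exists_ssubset_of_mem_gamma {𝒦 : Set (Set I)}
    (hunion : ∀ K L : Set I, K ∈ 𝒦 → L ∈ 𝒦 → (K ∩ L).Nonempty → K ∪ L ∈ 𝒦)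
    {B C : Set I} (hB : B ∈ Gamma 𝒦) (hC : C ∈ 𝒦) (hCne : C.Nonempty) (hCB : C ⊂ B) :
    ∃ K ∈ 𝒦, C ⊂ K ∧ K ⊆ B := by
  have hdis : IsDissociation B C (B \ C) :=
    ⟨hCne, Set.sdiff_nonempty.2 hCB.2, Set.disjoint_sdiff_right,
      Set.union_sdiff_cancel hCB.subset⟩
  obtain ⟨A, hA, hAB, hAC, x, hxA, -, hxC⟩ := hB C (B \ C) hdis
  rw [Set.union_sdiff_cancel hCB.subset] at hAB
  refine ⟨A ∪ C, hunion A C hA hC hAC, ?_, Set.union_subset hAB hCB.subset⟩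
  exact Set.subset_union_right.ssubset_of_not_subset fun h => hxC (h (Or.inl hxA))

theorem IsConnectivity.gamma_subset [Finite I] {𝒦 : Set (Set I)} (h𝒦 : IsConnectivity 𝒦) :
    Gamma 𝒦 ⊆ 𝒦 := by
  obtain ⟨hempty, hsingle, hunion⟩ := h𝒦
  intro B hB
  obtain rfl | ⟨b, hb⟩ := B.eq_empty_or_nonempty
  · exact hempty
  obtain ⟨C, hbC, hC⟩ := Finite.exists_le_maximal (p := fun K => K ∈ 𝒦 ∧ K ⊆ B)
    (a := {b}) ⟨hsingle b, Set.singleton_subset_iff.2 hb⟩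
  obtain rfl | hCB := hC.prop.2.eq_or_ssubset
  · exact hC.prop.1
  obtain ⟨K, hK, hCK, hKB⟩ :=
    exists_ssubset_of_mem_gamma hunion hB hC.prop.1 ⟨b, hbC rfl⟩ hCB
  exact absurd (hC.2 ⟨hK, hKB⟩ hCK.subset) hCK.2

theorem stmt3_general {I : Type u} [Fintype I] (𝒦 : Set (Set I))
    (h𝒦 : IsConnectivity 𝒦) :
    Gamma 𝒦 = 𝒦 :=
  (h𝒦.gamma_subset).antisymm (subset_gamma 𝒦)

/-- for every integral connectivity structure `𝒦` on a finite nonempty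
set, `Γ_𝒦 = 𝒦`: a subset `B` belongs to `𝒦` iff every dissociation of `B` is
contested by some member of `𝒦`. -/
theorem stmt3 {I : Type u} [Fintype I] [Nonempty I] (𝒦 : Set (Set I))
    (h𝒦 : IsConnectivity 𝒦) :
    Gamma 𝒦 = 𝒦 :=
  stmt3_general 𝒦 h𝒦
end

section
/- For every random family φ on a finite nonempty set I, the set K_φ of subsets J ⊆ I such that φ contests every dissociation of J is an integral connectivity structure on I. -/
universe u

variable {I : Type u}

open Classical in
lemma probEq_congr {I : Type u} (φ : RandomFamily I) {J : Set I} {x y : ∀ i, φ.R i}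
    (h : ∀ i ∈ J, x i = y i) : φ.probEq J x = φ.probEq J y := by
  unfold RandomFamily.probEq
  congr 1
  ext ω
  constructor <;> intro hw j hj
  · rw [← h j hj]; exact hw j hj
  · rw [h j hj]; exact hw j hj

open Classical in
lemma probEq_split {I : Type u} [Fintype I] (φ : RandomFamily I) (C D : Set I)
    (hCD : Disjoint C D) (x : ∀ i, φ.R i) :
    φ.probEq C x =
      ∑ x' ∈ Finset.univ.filter (fun x' : ∀ i, φ.R i => ∀ i, i ∉ D → x' i = x i),
        φ.probEq (C ∪ D) x' := by
  unfold RandomFamily.probEq RandomFamily.prob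
  rw [Finset.sum_comm]
  refine Finset.sum_congr rfl fun ω _ => ?_
  rw [Set.indicator_apply]
  by_cases hω : ω ∈ {ω | ∀ j ∈ C, φ.X j ω = x j}
  · rw [if_pos hω]
    set x₀ : ∀ i, φ.R i := fun i => if i ∈ D then φ.X i ω else x i with hx₀
    rw [Finset.sum_eq_single_of_mem x₀]
    · rw [Set.indicator_apply, if_pos]
      intro j hj
      rcases hj with hj | hj
      · simp only [hx₀, if_neg (Set.disjoint_left.mp hCD hj)]
        exact hω j hj
      · simp only [hx₀, if_pos hj]
    · simp only [Finset.mem_filter, Finset.mem_univ, true_and]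
      intro i hi
      simp [hx₀, hi]
    · intro x' hx' hne
      rw [Set.indicator_apply, if_neg]
      intro hmem
      apply hne
      funext i
      by_cases hi : i ∈ D
      · rw [← hmem i (Or.inr hi)]
        simp [hx₀, hi]
      · rw [(Finset.mem_filter.mp hx').2 i hi]
        simp [hx₀, hi]
  · rw [if_neg hω]
    refine (Finset.sum_eq_zero fun x' hx' => ?_).symm
    rw [Set.indicator_apply, if_neg]
    intro hmem
    apply hω
    intro j hj
    rw [hmem j (Or.inl hj)]
    exact (Finset.mem_filter.mp hx').2 j (Set.disjoint_left.mp hCD hj)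

open Classical in
lemma respects_mono {I : Type u} [Fintype I] (φ : RandomFamily I) {J1 J2 A B : Set I}
    (hd : Disjoint J1 J2) (hA : A ⊆ J1) (hB : B ⊆ J2)
    (h : φ.Respects J1 J2) : φ.Respects A B := by
  intro x
  set D1 : Set I := J1 \ A with hD1
  set D2 : Set I := J2 \ B with hD2
  have hdisj : Disjoint (A ∪ B) (D1 ∪ D2) := by
    rw [Set.disjoint_union_left, Set.disjoint_union_right, Set.disjoint_union_right]
    refine ⟨⟨Set.disjoint_sdiff_right.mono_left Set.Subset.rfl, ?_⟩,
      ⟨?_, Set.disjoint_sdiff_right.mono_left Set.Subset.rfl⟩⟩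
    · exact (hd.mono hA Set.diff_subset)
    · exact (hd.symm.mono hB Set.diff_subset)
  have hunion : (A ∪ B) ∪ (D1 ∪ D2) = J1 ∪ J2 := by
    rw [hD1, hD2, Set.union_union_union_comm, Set.union_diff_cancel hA,
      Set.union_diff_cancel hB]
  have hD12 : Disjoint D1 D2 := hd.mono Set.diff_subset Set.diff_subset
  have hJ1 : A ∪ D1 = J1 := Set.union_diff_cancel hA
  have hJ2 : B ∪ D2 = J2 := Set.union_diff_cancel hB
  rw [probEq_split φ (A ∪ B) (D1 ∪ D2) hdisj x,
      probEq_split φ A D1 Set.disjoint_sdiff_right (x := x),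
      probEq_split φ B D2 Set.disjoint_sdiff_right (x := x),
      hunion, hJ1, hJ2, Finset.sum_mul_sum, ← Finset.sum_product']
  refine Finset.sum_nbij'
    (i := fun x' => (fun i => if i ∈ D1 then x' i else x i,
                     fun i => if i ∈ D2 then x' i else x i))
    (j := fun p => fun i => if i ∈ D1 then p.1 i else if i ∈ D2 then p.2 i else x i)
    ?_ ?_ ?_ ?_ ?_
  · intro x' hx'
    simp only [Finset.mem_product, Finset.mem_filter, Finset.mem_univ, true_and]
    constructor <;> intro i hi <;> simp [hi]
  · intro p hp
    simp only [Finset.mem_product, Finset.mem_filter, Finset.mem_univ, true_and] at hp ⊢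
    intro i hi
    rw [Set.mem_union] at hi
    push_neg at hi
    simp [hi.1, hi.2]
  · intro x' hx'
    simp only [Finset.mem_filter, Finset.mem_univ, true_and] at hx'
    funext i
    by_cases h1 : i ∈ D1
    · simp [h1]
    · by_cases h2 : i ∈ D2
      · simp [h1, h2]
      · simp only [if_neg h1, if_neg h2]
        exact (hx' i (by simp [h1, h2])).symm
  · intro p hp
    simp only [Finset.mem_product, Finset.mem_filter, Finset.mem_univ, true_and] at hp
    refine Prod.ext (funext fun i => ?_) (funext fun i => ?_)
    · by_cases h1 : i ∈ D1
      · simp [h1]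
      · simp only [if_neg h1]
        exact (hp.1 i h1).symm
    · by_cases h2 : i ∈ D2
      · have h1 : i ∉ D1 := Set.disjoint_right.mp hD12 h2
        simp [h1, h2]
      · simp only [if_neg h2]
        exact (hp.2 i h2).symm
  · intro x' hx'
    simp only [Finset.mem_filter, Finset.mem_univ, true_and] at hx'
    rw [h x']
    congr 1
    · refine probEq_congr φ fun i hi => ?_
      by_cases h1 : i ∈ D1
      · simp [h1]
      · simp only [if_neg h1]
        refine hx' i fun hm => ?_
        rcases hm with hm | hm
        · exact h1 hm
        · exact Set.disjoint_left.mp hd hi hm.1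
    · refine probEq_congr φ fun i hi => ?_
      by_cases h2 : i ∈ D2
      · simp [h2]
      · simp only [if_neg h2]
        refine hx' i fun hm => ?_
        rcases hm with hm | hm
        · exact Set.disjoint_right.mp hd hi hm.1
        · exact h2 hm

/-- for every random family `φ` on a finite nonempty set `I`, the set
`K_φ` of subsets all of whose dissociations are contested by `φ` is an integral
connectivity structure on `I`. -/
theorem stmt9 {I : Type u} [Fintype I] [Nonempty I] (φ : RandomFamily I) :
    IsConnectivity φ.Kconn := by
  refine ⟨?_, ?_, ?_⟩
  · intro J1 J2 ⟨h1, h2, hd, hu⟩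
    exact absurd (Set.eq_empty_of_subset_empty (hu ▸ Set.subset_union_left)) h1.ne_empty
  · intro i J1 J2 ⟨h1, h2, hd, hu⟩
    obtain ⟨a, ha⟩ := h1
    obtain ⟨b, hb⟩ := h2
    have ha' : a ∈ ({i} : Set I) := hu ▸ Set.mem_union_left J2 ha
    have hb' : b ∈ ({i} : Set I) := hu ▸ Set.mem_union_right J1 hb
    rw [Set.mem_singleton_iff] at ha' hb'
    refine fun _ => Set.disjoint_left.mp hd ha ?_
    rw [ha'.trans hb'.symm]
    exact hb
  · intro K L hK hL ⟨i, hiK, hiL⟩ J1 J2 ⟨h1, h2, hd, hu⟩ hresp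
    have key : ∀ M : Set I, M ∈ φ.Kconn → M ⊆ J1 ∪ J2 → M ⊆ J1 ∨ M ⊆ J2 := by
      intro M hM hMsub
      by_contra hcon
      push_neg at hcon
      obtain ⟨a, haM, haJ1⟩ := Set.not_subset.mp hcon.1
      obtain ⟨b, hbM, hbJ2⟩ := Set.not_subset.mp hcon.2
      have ha2 : a ∈ J2 := (hMsub haM).resolve_left haJ1
      have hb1 : b ∈ J1 := (hMsub hbM).resolve_right hbJ2
      refine hM (M ∩ J1) (M ∩ J2) ⟨⟨b, hbM, hb1⟩, ⟨a, haM, ha2⟩, hd.mono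
        Set.inter_subset_right Set.inter_subset_right, ?_⟩
        (respects_mono φ hd Set.inter_subset_right Set.inter_subset_right hresp)
      rw [← Set.inter_union_distrib_left]
      exact Set.inter_eq_self_of_subset_left hMsub
    have hKsub : K ⊆ J1 ∪ J2 := fun a ha => hu.ge (Or.inl ha)
    have hLsub : L ⊆ J1 ∪ J2 := fun a ha => hu.ge (Or.inr ha)
    rcases key K hK hKsub with hK1 | hK2 <;> rcases key L hL hLsub with hL1 | hL2
    · obtain ⟨b, hb⟩ := h2
      have hb' : b ∈ K ∪ L := hu ▸ Set.mem_union_right J1 hb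
      exact Set.disjoint_left.mp hd (hb'.elim (fun h => hK1 h) (fun h => hL1 h)) hb
    · exact Set.disjoint_left.mp hd (hK1 hiK) (hL2 hiL)
    · exact Set.disjoint_left.mp hd (hL1 hiL) (hK2 hiK)
    · obtain ⟨a, ha⟩ := h1
      have ha' : a ∈ K ∪ L := hu ▸ Set.mem_union_left J2 ha
      exact Set.disjoint_left.mp hd ha (ha'.elim (fun h => hK2 h) (fun h => hL2 h))
end

section
/- Let φ be a random family on a finite nonempty set I. For every global dissociation σ of I, φ respects σ if and only if K_φ respects σ (i.e. σ is adapted to the connected components of K_φ). Consequently, the random vectors X_{C₁}, …, X_{C_p} indexed by the connected components C₁, …, C_p of (I, K_φ) are mutually independent: for all values x_I, P(X_I = x_I) = ∏_{k=1}^{p} P(X_{C_k} = x_{C_k}). -/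
universe u

variable {I : Type u}

/-!
Marginalising a product formula shows that a respected dissociation `{A, B}` makes every
sub-dissociation `{A', B'}` (`A' ⊆ A`, `B' ⊆ B`) respected too. Hence no member of `K_φ` can
straddle a respected dissociation, which makes `K_φ` closed under unions of overlapping members,
so its maximal members are pairwise disjoint. Splitting a set along respected dissociations
until every piece lies in `K_φ` then factorises `P(X_J = x)` over the components, and this
factorisation gives back the product formula for every dissociation that no component straddles.
-/

theorem IsDissociation.symm {J A B : Set I} (h : IsDissociation J A B) :
    IsDissociation J B A :=
  ⟨h.2.1, h.1, h.2.2.1.symm, Set.union_comm B A ▸ h.2.2.2⟩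

theorem subset_of_not_contests {K A B : Set I} (hKAB : K ⊆ A ∪ B) (hK : ¬ Contests K A B)
    (hKA : (K ∩ A).Nonempty) : K ⊆ A := by
  intro i hi
  by_contra hiA
  exact hK ⟨hKAB, hKA, i, hi, (hKAB hi).resolve_left hiA⟩

theorem exists_isComponent_superset [Finite I] {𝒦 : Set (Set I)} {J : Set I} (hJ : J ∈ 𝒦) :
    ∃ C, IsComponent 𝒦 C ∧ J ⊆ C := by
  obtain ⟨C, ⟨hC, hJC⟩, hmax⟩ :=
    Set.Finite.exists_maximalFor id {K ∈ 𝒦 | J ⊆ K} (Set.toFinite _) ⟨J, hJ, subset_rfl⟩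
  exact ⟨C, ⟨hC, fun K hK hCK => (hmax ⟨hK, hJC.trans hCK⟩ hCK).antisymm hCK⟩, hJC⟩

theorem IsComponent.eq_of_inter_nonempty {𝒦 : Set (Set I)}
    (h𝒦 : ∀ K ∈ 𝒦, ∀ L ∈ 𝒦, (K ∩ L).Nonempty → K ∪ L ∈ 𝒦) {C C' : Set I}
    (hC : IsComponent 𝒦 C) (hC' : IsComponent 𝒦 C') (hCC' : (C ∩ C').Nonempty) : C = C' := by
  have hunion := h𝒦 C hC.1 C' hC'.1 hCC'
  exact (hC.2 _ hunion Set.subset_union_left).symm.trans (hC'.2 _ hunion Set.subset_union_right)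

namespace RandomFamily

variable (φ : RandomFamily I)

theorem probEq_empty (x : ∀ i, φ.R i) : φ.probEq ∅ x = 1 := by
  simp [probEq, prob, φ.P_total]

theorem probEq_congr {J : Set I} {x y : ∀ i, φ.R i} (h : ∀ j ∈ J, x j = y j) :
    φ.probEq J x = φ.probEq J y := by
  unfold probEq
  congr 1
  ext ω
  exact forall₂_congr fun j hj => by rw [h j hj]

open Classical in
noncomputable def agreeOff [Fintype I] (D : Set I) (x : ∀ i, φ.R i) : Finset (∀ i, φ.R i) :=
  Finset.univ.filter fun y => ∀ i ∉ D, y i = x i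

theorem mem_agreeOff [Fintype I] {D : Set I} {x y : ∀ i, φ.R i} :
    y ∈ φ.agreeOff D x ↔ ∀ i ∉ D, y i = x i := by
  simp [agreeOff]

/-- The events `X_A = y`, for `y` agreeing with `x` off `D`, partition the event
`X_{A \ D} = x`: the only candidate for `y` at a given `ω` is `X(ω)` on `D` and `x` off `D`. -/
theorem probEq_sdiff_eq_sum [Fintype I] {A D : Set I} (hD : D ⊆ A) (x : ∀ i, φ.R i) :
    φ.probEq (A \ D) x = ∑ y ∈ φ.agreeOff D x, φ.probEq A y := by
  classical
  unfold probEq prob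
  rw [Finset.sum_comm]
  refine Finset.sum_congr rfl fun ω _ => ?_
  set E : Set I → (∀ i, φ.R i) → Set φ.Ω := fun J x => {ω | ∀ j ∈ J, φ.X j ω = x j}
  set y₀ : ∀ i, φ.R i := fun i => if i ∈ D then φ.X i ω else x i
  have hy₀ : y₀ ∈ φ.agreeOff D x := by
    simp +contextual [mem_agreeOff, y₀]
  have hmem : ∀ y ∈ φ.agreeOff D x, ω ∈ E A y ↔ ω ∈ E (A \ D) x ∧ y₀ = y := by
    intro y hy
    rw [mem_agreeOff] at hy
    constructor
    · intro hω
      refine ⟨fun j hj => (hω j hj.1).trans (hy j hj.2), funext fun i => ?_⟩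
      by_cases hi : i ∈ D
      · simp [y₀, hi, hω i (hD hi)]
      · simp [y₀, hi, hy i hi]
    · rintro ⟨hω, rfl⟩ j hj
      by_cases hjD : j ∈ D
      · simp [y₀, hjD]
      · simp [y₀, hjD, hω j ⟨hj, hjD⟩]
  calc (E (A \ D) x).indicator φ.P ω
      = ∑ y ∈ φ.agreeOff D x, if y₀ = y then (E (A \ D) x).indicator φ.P ω else 0 := by
        rw [Finset.sum_ite_eq, if_pos hy₀]
    _ = _ := Finset.sum_congr rfl fun y hy => by
      by_cases hω : ω ∈ E A y
      · obtain ⟨hω', rfl⟩ := (hmem y hy).1 hω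
        rw [if_pos rfl, Set.indicator_of_mem hω', Set.indicator_of_mem hω]
      · rw [Set.indicator_of_notMem hω, ite_eq_right_iff]
        exact fun h => Set.indicator_of_notMem (fun hω' => hω ((hmem y hy).2 ⟨hω', h⟩)) _

variable {φ}

theorem Respects.symm {A B : Set I} (h : φ.Respects A B) : φ.Respects B A := fun x => by
  rw [Set.union_comm, h x, mul_comm]

theorem Respects.mono_left [Fintype I] {A B A' : Set I} (hAB : Disjoint A B)
    (h : φ.Respects A B) (hA' : A' ⊆ A) : φ.Respects A' B := by
  intro x
  have hunion : A' ∪ B = (A ∪ B) \ (A \ A') := by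
    ext i
    have := fun hi : i ∈ A => Set.disjoint_left.mp hAB hi
    have := @hA' i
    simp only [Set.mem_union, Set.mem_sdiff]
    tauto
  have hB : ∀ y ∈ φ.agreeOff (A \ A') x, φ.probEq B y = φ.probEq B x := fun y hy =>
    φ.probEq_congr fun j hj =>
      (φ.mem_agreeOff.mp hy) j fun hj' => Set.disjoint_right.mp hAB hj hj'.1
  calc φ.probEq (A' ∪ B) x
      = ∑ y ∈ φ.agreeOff (A \ A') x, φ.probEq (A ∪ B) y := by
        rw [hunion, φ.probEq_sdiff_eq_sum (Set.sdiff_subset.trans Set.subset_union_left)]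
    _ = ∑ y ∈ φ.agreeOff (A \ A') x, φ.probEq A y * φ.probEq B x :=
        Finset.sum_congr rfl fun y hy => by rw [h y, hB y hy]
    _ = φ.probEq A' x * φ.probEq B x := by
        rw [← Finset.sum_mul, ← φ.probEq_sdiff_eq_sum Set.sdiff_subset,
          Set.sdiff_sdiff_cancel_left hA']

theorem Respects.mono [Fintype I] {A B A' B' : Set I} (hAB : Disjoint A B)
    (h : φ.Respects A B) (hA' : A' ⊆ A) (hB' : B' ⊆ B) : φ.Respects A' B' :=
  ((h.mono_left hAB hA').symm.mono_left (hAB.mono_left hA').symm hB').symm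

theorem not_contests_of_mem_Kconn [Fintype I] {K A B : Set I} (hK : K ∈ φ.Kconn)
    (hAB : Disjoint A B) (h : φ.Respects A B) : ¬ Contests K A B := by
  rintro ⟨hKAB, hKA, hKB⟩
  refine hK (K ∩ A) (K ∩ B) ⟨hKA, hKB, hAB.mono Set.inter_subset_right Set.inter_subset_right,
    by rw [← Set.inter_union_distrib_left, Set.inter_eq_self_of_subset_left hKAB]⟩ ?_
  exact h.mono hAB Set.inter_subset_right Set.inter_subset_right

theorem union_mem_Kconn [Fintype I] {K L : Set I} (hK : K ∈ φ.Kconn) (hL : L ∈ φ.Kconn)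
    (hKL : (K ∩ L).Nonempty) : K ∪ L ∈ φ.Kconn := by
  suffices key : ∀ A B, IsDissociation (K ∪ L) A B → φ.Respects A B →
      (K ∩ L ∩ A).Nonempty → False by
    obtain ⟨z, hz⟩ := hKL
    intro A B hd h
    rcases (hd.2.2.2 ▸ Or.inl hz.1 : z ∈ A ∪ B) with hzA | hzB
    · exact key A B hd h ⟨z, hz, hzA⟩
    · exact key B A hd.symm h.symm ⟨z, hz, hzB⟩
  rintro A B ⟨-, ⟨b, hb⟩, hAB, hunion⟩ h ⟨z, ⟨hzK, hzL⟩, hzA⟩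
  have hKA : K ⊆ A := subset_of_not_contests (hunion ▸ Set.subset_union_left)
    (not_contests_of_mem_Kconn hK hAB h) ⟨z, hzK, hzA⟩
  have hLA : L ⊆ A := subset_of_not_contests (hunion ▸ Set.subset_union_right)
    (not_contests_of_mem_Kconn hL hAB h) ⟨z, hzL, hzA⟩
  exact Set.disjoint_right.mp hAB hb (Set.union_subset hKA hLA (hunion ▸ Or.inr hb))

variable (φ)

theorem probEq_eq_prod_isComponent [Fintype I] (J : Set I) (x : ∀ i, φ.R i) :
    φ.probEq J x =
      ∏ C ∈ (Set.toFinite {C : Set I | IsComponent φ.Kconn C}).toFinset, φ.probEq (C ∩ J) x := by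
  induction J using WellFoundedLT.induction with
  | ind J ih =>
  by_cases hJ : J ∈ φ.Kconn
  · obtain ⟨C₀, hC₀, hJC₀⟩ := exists_isComponent_superset hJ
    rw [Finset.prod_eq_single_of_mem C₀ (by simpa using hC₀),
      Set.inter_eq_self_of_subset_right hJC₀]
    intro C hC hne
    have hCJ : C ∩ J = ∅ := by
      by_contra! hCJ
      obtain ⟨i, hiC, hiJ⟩ := hCJ
      exact hne ((by simpa using hC : IsComponent φ.Kconn C).eq_of_inter_nonempty
        (fun K hK L hL => union_mem_Kconn hK hL) hC₀ ⟨i, hiC, hJC₀ hiJ⟩)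
    rw [hCJ, probEq_empty]
  · obtain ⟨A, B, ⟨⟨a, ha⟩, ⟨b, hb⟩, hAB, rfl⟩, h⟩ :
        ∃ A B, IsDissociation J A B ∧ φ.Respects A B := by
      simpa [Kconn] using hJ
    have hA : A ⊂ A ∪ B :=
      Set.ssubset_union_left_iff.2 fun hBA => Set.disjoint_left.mp hAB (hBA hb) hb
    have hB : B ⊂ A ∪ B :=
      Set.ssubset_union_right_iff.2 fun hAB' => Set.disjoint_left.mp hAB ha (hAB' ha)
    rw [h x, ih A hA, ih B hB, ← Finset.prod_mul_distrib]
    refine Finset.prod_congr rfl fun C _ => ?_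
    rw [Set.inter_union_distrib_left]
    exact (h.mono hAB Set.inter_subset_right Set.inter_subset_right x).symm

theorem respects_of_forall_isComponent [Fintype I] {J1 J2 : Set I}
    (h : ∀ C, IsComponent φ.Kconn C → ¬ ((C ∩ J1).Nonempty ∧ (C ∩ J2).Nonempty)) :
    φ.Respects J1 J2 := by
  intro x
  rw [φ.probEq_eq_prod_isComponent, φ.probEq_eq_prod_isComponent J1,
    φ.probEq_eq_prod_isComponent J2, ← Finset.prod_mul_distrib]
  refine Finset.prod_congr rfl fun C hC => ?_
  rw [Set.inter_union_distrib_left]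
  rcases not_and_or.mp (h C (by simpa using hC)) with hC1 | hC2
  · rw [Set.not_nonempty_iff_eq_empty.mp hC1, Set.empty_union, probEq_empty, one_mul]
  · rw [Set.not_nonempty_iff_eq_empty.mp hC2, Set.union_empty, probEq_empty, mul_one]

end RandomFamily

theorem stmt11_general {I : Type u} [Fintype I] (φ : RandomFamily I) :
    (∀ J1 J2 : Set I, IsDissociation (Set.univ : Set I) J1 J2 →
        (φ.Respects J1 J2 ↔ ∀ K ∈ φ.Kconn, ¬ Contests K J1 J2)) ∧
    (∀ x : ∀ i, φ.R i,
        φ.probEq Set.univ x =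
          ∏ C ∈ (Set.toFinite {C : Set I | IsComponent φ.Kconn C}).toFinset,
            φ.probEq C x) := by
  refine ⟨fun J1 J2 hσ => ⟨fun h K hK => RandomFamily.not_contests_of_mem_Kconn hK hσ.2.2.1 h,
    fun h => ?_⟩, fun x => ?_⟩
  · refine φ.respects_of_forall_isComponent fun C hC ⟨hC1, hC2⟩ => ?_
    exact h C hC.1 ⟨hσ.2.2.2 ▸ Set.subset_univ C, hC1, hC2⟩
  · simpa using φ.probEq_eq_prod_isComponent Set.univ x

/-- a global dissociation of `I` is respected by `φ` iff it is respected
by `K_φ`; consequently the random vectors indexed by the connected components of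
`(I, K_φ)` are mutually independent. -/
theorem stmt11 {I : Type u} [Fintype I] [Nonempty I] (φ : RandomFamily I) :
    (∀ J1 J2 : Set I, IsDissociation (Set.univ : Set I) J1 J2 →
        (φ.Respects J1 J2 ↔ ∀ K ∈ φ.Kconn, ¬ Contests K J1 J2)) ∧
    (∀ x : ∀ i, φ.R i,
        φ.probEq Set.univ x =
          ∏ C ∈ (Set.toFinite {C : Set I | IsComponent φ.Kconn C}).toFinset,
            φ.probEq C x) :=
  stmt11_general φ
end

section
/- Let φ = ((Ω,P),(X_i)) and ψ = ((Λ,Q),(Y_i)) be random families on a finite nonempty set I, and let φ⊗ψ be their tensor product. For every dissociation σ (of any subset of I), φ⊗ψ respects σ if and only if both φ respects σ and ψ respects σ. -/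
universe u

variable {I : Type u}

section Aux

namespace RandomFamily

attribute [local instance] Classical.propDecidable

variable {I : Type u} [Fintype I]

lemma probEq_nonneg (φ : RandomFamily I) (J : Set I) (x : ∀ i, φ.R i) :
    0 ≤ φ.probEq J x :=
  Finset.sum_nonneg fun ω _ => Set.indicator_nonneg (fun a _ => φ.P_nonneg a) ω

lemma nonempty_Ω (φ : RandomFamily I) : Nonempty φ.Ω := by
  by_contra h
  rw [not_nonempty_iff] at h
  have := φ.P_total
  rw [Finset.univ_eq_empty, Finset.sum_empty] at this
  norm_num at this

lemma exists_pos (φ : RandomFamily I) : ∃ ω, 0 < φ.P ω := by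
  by_contra h
  push_neg at h
  have : ∑ ω, φ.P ω = 0 :=
    Finset.sum_eq_zero fun ω _ => le_antisymm (h ω) (φ.P_nonneg ω)
  rw [φ.P_total] at this; norm_num at this

lemma probEq_mono (φ : RandomFamily I) {J J' : Set I} (h : J ⊆ J') (x : ∀ i, φ.R i) :
    φ.probEq J' x ≤ φ.probEq J x := by
  apply Finset.sum_le_sum
  intro ω _
  apply Set.indicator_le_indicator_of_subset
  · intro ω' hw j hj; exact hw j (h hj)
  · exact φ.P_nonneg

lemma le_probEq (φ : RandomFamily I) (J : Set I) (ω : φ.Ω) :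
    φ.P ω ≤ φ.probEq J (fun i => φ.X i ω) := by
  unfold probEq prob
  have h : φ.P ω = Set.indicator {ω' | ∀ j ∈ J, φ.X j ω' = φ.X j ω} φ.P ω := by
    rw [Set.indicator_of_mem]; intro j _; rfl
  rw [h]
  exact Finset.single_le_sum
    (fun ω' _ => Set.indicator_nonneg (fun a _ => φ.P_nonneg a) ω') (Finset.mem_univ ω)

/-- Extend a tuple on `J` to a tuple on `I`. -/
noncomputable def extFun (φ : RandomFamily I) (J : Set I) (ω₀ : φ.Ω)
    (v : ∀ j : J, φ.R j) (i : I) : φ.R i := by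
  classical exact if h : i ∈ J then v ⟨i, h⟩ else φ.X i ω₀

lemma sumA (φ : RandomFamily I) (J : Set I) (ω₀ : φ.Ω)
    [Fintype (∀ j : J, φ.R j)] :
    ∑ v : (∀ j : J, φ.R j), φ.probEq J (φ.extFun J ω₀ v) = 1 := by
  classical
  unfold probEq prob
  rw [Finset.sum_comm, ← φ.P_total]
  apply Finset.sum_congr rfl
  intro ω _
  rw [Finset.sum_eq_single (fun j : J => φ.X j ω)]
  · rw [Set.indicator_of_mem]
    intro j hj
    simp [extFun, hj]
  · intro v _ hv
    rw [Set.indicator_of_notMem]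
    intro hmem
    apply hv
    funext j
    have := hmem j j.2
    simp only [extFun, j.2, dif_pos] at this
    exact this.symm
  · intro h; exact absurd (Finset.mem_univ _) h

lemma sumB (φ : RandomFamily I) (J1 J2 : Set I) (hd : Disjoint J1 J2) (ω₀ : φ.Ω)
    [Fintype (∀ j : (J1 ∪ J2 : Set I), φ.R j)] :
    ∑ v : (∀ j : (J1 ∪ J2 : Set I), φ.R j),
      φ.probEq J1 (φ.extFun (J1 ∪ J2) ω₀ v) * φ.probEq J2 (φ.extFun (J1 ∪ J2) ω₀ v) = 1 := by
  classical
  unfold probEq prob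
  simp_rw [Finset.sum_mul_sum]
  rw [Finset.sum_comm]
  have key : ∀ ω : φ.Ω,
      (∑ v : (∀ j : (J1 ∪ J2 : Set I), φ.R j), ∑ ω' : φ.Ω,
        Set.indicator {ω'' | ∀ j ∈ J1, φ.X j ω'' = φ.extFun (J1 ∪ J2) ω₀ v j} φ.P ω *
        Set.indicator {ω'' | ∀ j ∈ J2, φ.X j ω'' = φ.extFun (J1 ∪ J2) ω₀ v j} φ.P ω')
      = ∑ ω' : φ.Ω, φ.P ω * φ.P ω' := by
    intro ω
    rw [Finset.sum_comm]
    apply Finset.sum_congr rfl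
    intro ω' _
    rw [Finset.sum_eq_single
      (fun j : (J1 ∪ J2 : Set I) => if h : (j : I) ∈ J1 then φ.X j ω else φ.X j ω')]
    · rw [Set.indicator_of_mem, Set.indicator_of_mem]
      · intro j hj
        have hj1 : (j : I) ∉ J1 := fun h => hd.ne_of_mem h hj rfl
        simp [extFun, Set.mem_union, hj, hj1]
      · intro j hj
        simp [extFun, Set.mem_union, hj]
    · intro v _ hv
      by_cases h1 : ω ∈ {ω'' | ∀ j ∈ J1, φ.X j ω'' = φ.extFun (J1 ∪ J2) ω₀ v j}
      · by_cases h2 : ω' ∈ {ω'' | ∀ j ∈ J2, φ.X j ω'' = φ.extFun (J1 ∪ J2) ω₀ v j}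
        · exfalso
          apply hv
          funext j
          rcases j.2 with hj | hj
          · have := h1 j hj
            simp only [extFun, j.2, dif_pos] at this
            simp [hj, ← this]
          · have := h2 j hj
            have hj1 : (j : I) ∉ J1 := fun h => hd.ne_of_mem h hj rfl
            simp only [extFun, j.2, dif_pos] at this
            simp [hj1, ← this]
        · rw [Set.indicator_of_notMem h2, mul_zero]
      · rw [Set.indicator_of_notMem h1, zero_mul]
    · intro h; exact absurd (Finset.mem_univ _) h
  rw [Finset.sum_congr rfl fun ω _ => key ω]
  simp_rw [← Finset.mul_sum, φ.P_total, mul_one]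
  exact φ.P_total

lemma respects_of_scaled (φ : RandomFamily I) {J1 J2 : Set I} (hd : Disjoint J1 J2) (c : ℝ)
    (h : ∀ x, φ.probEq (J1 ∪ J2) x = c * (φ.probEq J1 x * φ.probEq J2 x)) :
    φ.Respects J1 J2 := by
  classical
  obtain ⟨ω₀⟩ := φ.nonempty_Ω
  have h1 := φ.sumA (J1 ∪ J2) ω₀
  have h2 := φ.sumB J1 J2 hd ω₀
  simp only [h] at h1
  rw [← Finset.mul_sum, h2, mul_one] at h1
  intro x
  rw [h x, h1, one_mul]

lemma tensor_probEq (φ ψ : RandomFamily I) (J : Set I)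
    (x : ∀ i, φ.R i) (y : ∀ i, ψ.R i) :
    (φ.tensor ψ).probEq J (fun i => (x i, y i)) = φ.probEq J x * ψ.probEq J y := by
  classical
  unfold probEq prob
  show (∑ p : φ.Ω × ψ.Ω,
      Set.indicator {p : φ.Ω × ψ.Ω | ∀ j ∈ J, (φ.X j p.1, ψ.X j p.2) = (x j, y j)}
        (fun p => φ.P p.1 * ψ.P p.2) p) = _
  rw [Fintype.sum_prod_type, Finset.sum_mul_sum]
  apply Finset.sum_congr rfl
  intro ω _
  apply Finset.sum_congr rfl
  intro ξ _
  by_cases hA : ∀ j ∈ J, φ.X j ω = x j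
  · by_cases hB : ∀ j ∈ J, ψ.X j ξ = y j
    · have m1 : (ω, ξ) ∈ {p : φ.Ω × ψ.Ω | ∀ j ∈ J, (φ.X j p.1, ψ.X j p.2) = (x j, y j)} :=
        fun j hj => by simp [hA j hj, hB j hj]
      have m2 : ω ∈ {ω' | ∀ j ∈ J, φ.X j ω' = x j} := hA
      have m3 : ξ ∈ {ξ' | ∀ j ∈ J, ψ.X j ξ' = y j} := hB
      rw [Set.indicator_of_mem m1, Set.indicator_of_mem m2, Set.indicator_of_mem m3]
    · have m1 : (ω, ξ) ∉ {p : φ.Ω × ψ.Ω | ∀ j ∈ J, (φ.X j p.1, ψ.X j p.2) = (x j, y j)} :=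
        fun hmem => hB fun j hj => congrArg Prod.snd (hmem j hj)
      have m3 : ξ ∉ {ξ' | ∀ j ∈ J, ψ.X j ξ' = y j} := hB
      rw [Set.indicator_of_notMem m1, Set.indicator_of_notMem m3, mul_zero]
  · have m1 : (ω, ξ) ∉ {p : φ.Ω × ψ.Ω | ∀ j ∈ J, (φ.X j p.1, ψ.X j p.2) = (x j, y j)} :=
      fun hmem => hA fun j hj => congrArg Prod.fst (hmem j hj)
    have m2 : ω ∉ {ω' | ∀ j ∈ J, φ.X j ω' = x j} := hA
    rw [Set.indicator_of_notMem m1, Set.indicator_of_notMem m2, zero_mul]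

end RandomFamily

end Aux

/-- the tensor product `φ ⊗ ψ` respects a dissociation `σ` (of any
subset of `I`) iff both `φ` and `ψ` respect `σ`. -/
theorem stmt13 {I : Type u} [Fintype I] [Nonempty I] (φ ψ : RandomFamily I) :
    ∀ J J1 J2 : Set I, IsDissociation J J1 J2 →
      ((φ.tensor ψ).Respects J1 J2 ↔ φ.Respects J1 J2 ∧ ψ.Respects J1 J2) := by
    classical
  rintro J J1 J2 ⟨-, -, hd, -⟩
  constructor
  · intro h
    obtain ⟨ω₀, hω₀⟩ := φ.exists_pos
    obtain ⟨ξ₀, hξ₀⟩ := ψ.exists_pos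
    have key : ∀ (x : ∀ i, φ.R i) (y : ∀ i, ψ.R i),
        φ.probEq (J1 ∪ J2) x * ψ.probEq (J1 ∪ J2) y =
          (φ.probEq J1 x * ψ.probEq J1 y) * (φ.probEq J2 x * ψ.probEq J2 y) := by
      intro x y
      have hx := h (fun i => (x i, y i))
      rwa [RandomFamily.tensor_probEq φ ψ (J1 ∪ J2) x y,
        RandomFamily.tensor_probEq φ ψ J1 x y,
        RandomFamily.tensor_probEq φ ψ J2 x y] at hx
    set x₀ : ∀ i, φ.R i := fun i => φ.X i ω₀ with hx₀
    set y₀ : ∀ i, ψ.R i := fun i => ψ.X i ξ₀ with hy₀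
    have hb : 0 < ψ.probEq (J1 ∪ J2) y₀ := lt_of_lt_of_le hξ₀ (ψ.le_probEq _ ξ₀)
    have ha : 0 < φ.probEq (J1 ∪ J2) x₀ := lt_of_lt_of_le hω₀ (φ.le_probEq _ ω₀)
    constructor
    · apply φ.respects_of_scaled hd
        (ψ.probEq J1 y₀ * ψ.probEq J2 y₀ / ψ.probEq (J1 ∪ J2) y₀)
      intro x
      have hk := key x y₀
      field_simp
      linear_combination hk
    · apply ψ.respects_of_scaled hd
        (φ.probEq J1 x₀ * φ.probEq J2 x₀ / φ.probEq (J1 ∪ J2) x₀)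
      intro y
      have hk := key x₀ y
      field_simp
      linear_combination hk
  · rintro ⟨h1, h2⟩ z
    calc (φ.tensor ψ).probEq (J1 ∪ J2) z
        = φ.probEq (J1 ∪ J2) (fun i => (z i).1) * ψ.probEq (J1 ∪ J2) (fun i => (z i).2) :=
          RandomFamily.tensor_probEq φ ψ (J1 ∪ J2) _ _
      _ = (φ.probEq J1 (fun i => (z i).1) * φ.probEq J2 (fun i => (z i).1)) *
            (ψ.probEq J1 (fun i => (z i).2) * ψ.probEq J2 (fun i => (z i).2)) := by
          rw [h1 _, h2 _]
      _ = (φ.probEq J1 (fun i => (z i).1) * ψ.probEq J1 (fun i => (z i).2)) *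
            (φ.probEq J2 (fun i => (z i).1) * ψ.probEq J2 (fun i => (z i).2)) := by ring
      _ = (φ.tensor ψ).probEq J1 z * (φ.tensor ψ).probEq J2 z := by
          rw [← RandomFamily.tensor_probEq φ ψ J1, ← RandomFamily.tensor_probEq φ ψ J2]
          rfl
end

section
/- Let M ⊆ I be a subset of cardinality m ≥ 2 of a finite nonempty set I, and let β_M be the canonical M-brunnian family on I. Then the connectivity structure of β_M consists exactly of the empty set, the singletons, and M itself: K_{β_M} = {∅} ∪ {{i} : i ∈ I} ∪ {M} = [{M}]. Equivalently, M is the unique irreducible connected set of K_{β_M} of cardinality ≥ 2. -/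
universe u

variable {I : Type u}

/-!
Through `(B_i)_{i ∈ M}`, the sample space of `β_M` is the code of even-weight vectors in
`(ℤ/2)^M`, and deleting any one coordinate identifies this code with `(ℤ/2)^(m-1)`.
So for every `j₀ ∈ M` there are coordinates on the sample space in which each `B_i`,
`i ∈ M \ {j₀}`, is a coordinate function, while the `B_i` with `i ∉ M` are constant.
Data on disjoint index sets avoiding `j₀` then read disjoint coordinates and are independent.
Hence a set `J` with at least two points other than `M` has a respected dissociation:
`{{a}, J \ {a}}` if `J` misses a point of `M`, and `{M, J \ M}` if `J ⊋ M`.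
Conversely, the `B_i` with `i ∈ M` sum to zero, whereas every proper subfamily takes every
value with positive probability, so `β_M` contests every dissociation of `M`.
-/

section DependsOn

variable {ι : Type*} {α : ι → Type*}

theorem Nat.card_and_mul_card_pi_of_dependsOn {p q : (∀ i, α i) → Prop} {C : Set ι}
    (hp : DependsOn p C) (hq : DependsOn q Cᶜ) :
    Nat.card {x // p x ∧ q x} * Nat.card (∀ i, α i)
      = Nat.card {x // p x} * Nat.card {x // q x} := by
  classical
  have hpC (x y : ∀ i, α i) : p (C.piecewise x y) = p x :=
    hp fun i hi => C.piecewise_eq_of_mem _ _ hi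
  have hqC (x y : ∀ i, α i) : q (C.piecewise y x) = q x :=
    hq fun i hi => C.piecewise_eq_of_notMem _ _ hi
  rw [← Nat.card_prod, ← Nat.card_prod]
  refine Nat.card_congr
    { toFun := fun z => (⟨C.piecewise z.1.1 z.2, (hpC _ _).mpr z.1.2.1⟩,
        ⟨C.piecewise z.2 z.1.1, (hqC _ _).mpr z.1.2.2⟩)
      invFun := fun z => (⟨C.piecewise z.1.1 z.2.1, (hpC _ _).mpr z.1.2, (hqC _ _).mpr z.2.2⟩,
        C.piecewise z.2.1 z.1.1)
      left_inv := ?_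
      right_inv := ?_ }
  · rintro ⟨⟨x, -⟩, y⟩
    refine Prod.ext (Subtype.ext ?_) ?_ <;> funext i <;> by_cases hi : i ∈ C <;>
      simp [Set.piecewise, hi]
  · rintro ⟨⟨x, -⟩, ⟨y, -⟩⟩
    refine Prod.ext (Subtype.ext ?_) (Subtype.ext ?_) <;> funext i <;> by_cases hi : i ∈ C <;>
      simp [Set.piecewise, hi]

end DependsOn

def Fin.zeroSumEquivRemoveNth (G : Type*) [AddCommGroup G] {n : ℕ} (p : Fin (n + 1)) :
    {w : Fin (n + 1) → G // ∑ i, w i = 0} ≃ (Fin n → G) where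
  toFun w := p.removeNth w.1
  invFun v := ⟨p.insertNth (-∑ k, v k) v, by simp [Fin.sum_univ_succAbove _ p]⟩
  left_inv w := by
    have hw := w.2
    rw [Fin.sum_univ_succAbove _ p] at hw
    exact Subtype.ext (Fin.insertNth_eq_iff.2 ⟨(eq_neg_of_add_eq_zero_left hw).symm, rfl⟩)
  right_inv v := Fin.removeNth_insertNth _ _ _

section Connectivity

variable {I : Type u}

theorem mem_discreteStructure_iff {A : Set I} : A ∈ discreteStructure I ↔ A.Subsingleton :=
  ⟨by rintro (rfl | ⟨i, rfl⟩) <;> simp, Set.Subsingleton.eq_empty_or_singleton⟩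

theorem Set.Subsingleton.subset_of_inter_nonempty {K L : Set I} (hK : K.Subsingleton)
    (hKL : (K ∩ L).Nonempty) : K ⊆ L := by
  obtain ⟨z, hzK, hzL⟩ := hKL
  exact fun y hy => hK hzK hy ▸ hzL

theorem isConnectivity_of_nested {𝒦 : Set (Set I)} (hempty : ∅ ∈ 𝒦) (hsingleton : ∀ i, {i} ∈ 𝒦)
    (hnested : ∀ K ∈ 𝒦, ∀ L ∈ 𝒦, (K ∩ L).Nonempty → K ⊆ L ∨ L ⊆ K) : IsConnectivity 𝒦 := by
  refine ⟨hempty, hsingleton, fun K L hK hL hKL => ?_⟩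
  rcases hnested K hK L hL hKL with hKL | hLK
  · rwa [Set.union_eq_right.2 hKL]
  · rwa [Set.union_eq_left.2 hLK]

theorem IsConnectivity.mem_of_subsingleton {𝒦 : Set (Set I)} (h𝒦 : IsConnectivity 𝒦)
    {A : Set I} (hA : A.Subsingleton) : A ∈ 𝒦 := by
  obtain rfl | ⟨i, rfl⟩ := hA.eq_empty_or_singleton
  exacts [h𝒦.1, h𝒦.2.1 i]

theorem generated_subset {𝒜 𝒦 : Set (Set I)} (h𝒦 : IsConnectivity 𝒦) (h𝒜 : 𝒜 ⊆ 𝒦) :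
    generated 𝒜 ⊆ 𝒦 :=
  Set.sInter_subset_of_mem ⟨h𝒦, h𝒜⟩

theorem isConnectivity_discreteStructure : IsConnectivity (discreteStructure I) :=
  isConnectivity_of_nested (Or.inl rfl) (fun i => Or.inr ⟨i, rfl⟩) fun _ hK _ _ hKL =>
    .inl ((mem_discreteStructure_iff.1 hK).subset_of_inter_nonempty hKL)

theorem isConnectivity_discreteStructure_union_singleton (S : Set I) :
    IsConnectivity (discreteStructure I ∪ {S}) := by
  refine isConnectivity_of_nested (Or.inl (Or.inl rfl)) (fun i => Or.inl (Or.inr ⟨i, rfl⟩)) ?_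
  rintro K (hK | rfl) L (hL | rfl) hKL
  · exact .inl ((mem_discreteStructure_iff.1 hK).subset_of_inter_nonempty hKL)
  · exact .inl ((mem_discreteStructure_iff.1 hK).subset_of_inter_nonempty hKL)
  · rw [Set.inter_comm] at hKL
    exact .inr ((mem_discreteStructure_iff.1 hL).subset_of_inter_nonempty hKL)
  · exact .inl subset_rfl

theorem generated_singleton (S : Set I) : generated {S} = discreteStructure I ∪ {S} := by
  refine (generated_subset (isConnectivity_discreteStructure_union_singleton S)
    Set.subset_union_right).antisymm fun A hA => Set.mem_sInter.2 ?_
  rintro 𝒦 ⟨h𝒦, hS⟩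
  rcases hA with hA | rfl
  exacts [h𝒦.mem_of_subsingleton (mem_discreteStructure_iff.1 hA), hS rfl]

theorem irred_discreteStructure_union_singleton {S : Set I} (hS : 2 ≤ S.ncard) :
    irred (discreteStructure I ∪ {S}) = {S} := by
  have notMem {K : Set I} (hK : 2 ≤ K.ncard) : K ∉ discreteStructure I := by
    intro hK'
    have := (Set.ncard_le_one (mem_discreteStructure_iff.1 hK').finite).2
      fun a ha b hb => mem_discreteStructure_iff.1 hK' ha hb
    omega
  ext K
  refine ⟨fun ⟨hK, _, hK2⟩ => hK.resolve_left (notMem hK2), ?_⟩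
  rintro rfl
  refine ⟨.inr rfl, fun hgen => notMem hS ?_, hS⟩
  refine generated_subset isConnectivity_discreteStructure ?_ hgen
  rintro A ⟨hA | hA, hAS⟩
  exacts [hA, absurd hA hAS]

theorem not_isDissociation_of_subsingleton {J J1 J2 : Set I} (hJ : J.Subsingleton) :
    ¬ IsDissociation J J1 J2 := by
  rintro ⟨⟨a, ha⟩, ⟨b, hb⟩, hd, rfl⟩
  exact hd.ne_of_mem ha hb (hJ (Or.inl ha) (Or.inr hb))

theorem isDissociation_sdiff {J K : Set I} (hKJ : K ⊆ J) (hK : K.Nonempty)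
    (hJK : (J \ K).Nonempty) : IsDissociation J K (J \ K) :=
  ⟨hK, hJK, Set.disjoint_sdiff_right, Set.union_sdiff_cancel hKJ⟩

end Connectivity

namespace RandomFamily

variable {I : Type u}

theorem mem_Kconn_of_subsingleton (φ : RandomFamily I) {J : Set I} (hJ : J.Subsingleton) :
    J ∈ φ.Kconn :=
  fun _ _ hdis => absurd hdis (not_isDissociation_of_subsingleton hJ)

variable {φ : RandomFamily I} {c : ℝ}

theorem card_mul_eq_one (hP : ∀ ω, φ.P ω = c) : (Nat.card φ.Ω : ℝ) * c = 1 := by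
  simpa [hP, Nat.card_eq_fintype_card] using φ.P_total

theorem probEq_eq_card_mul (hP : ∀ ω, φ.P ω = c) (J : Set I) (x : ∀ i, φ.R i) :
    φ.probEq J x = Nat.card {ω // ∀ j ∈ J, φ.X j ω = x j} * c := by
  classical
  simp [probEq, prob, Set.indicator_apply, hP, Finset.sum_ite, Nat.card_eq_fintype_card,
    Fintype.card_subtype]

theorem respects_of_dependsOn (hP : ∀ ω, φ.P ω = c) {ι : Type*} {α : ι → Type*}
    (Φ : (∀ k, α k) ≃ φ.Ω) (C : Set ι) {J1 J2 : Set I}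
    (h1 : ∀ x : ∀ i, φ.R i, DependsOn (fun ξ => ∀ j ∈ J1, φ.X j (Φ ξ) = x j) C)
    (h2 : ∀ x : ∀ i, φ.R i, DependsOn (fun ξ => ∀ j ∈ J2, φ.X j (Φ ξ) = x j) Cᶜ) :
    φ.Respects J1 J2 := by
  intro x
  have hcard (J : Set I) : Nat.card {ω // ∀ j ∈ J, φ.X j ω = x j}
      = Nat.card {ξ // ∀ j ∈ J, φ.X j (Φ ξ) = x j} :=
    (Nat.card_congr (Φ.subtypeEquiv fun _ => Iff.rfl)).symm
  have hcount : (Nat.card {ω // ∀ j ∈ J1 ∪ J2, φ.X j ω = x j} : ℝ) * Nat.card φ.Ω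
      = Nat.card {ω // ∀ j ∈ J1, φ.X j ω = x j} * Nat.card {ω // ∀ j ∈ J2, φ.X j ω = x j} := by
    rw [hcard, hcard, hcard, ← Nat.card_congr Φ]
    simp only [Set.mem_union, or_imp, forall_and]
    exact_mod_cast Nat.card_and_mul_card_pi_of_dependsOn (h1 x) (h2 x)
  simp only [probEq_eq_card_mul hP]
  linear_combination c ^ 2 * hcount - (Nat.card {ω // ∀ j ∈ J1 ∪ J2, φ.X j ω = x j} : ℝ) * c *
    card_mul_eq_one hP

end RandomFamily

section Brunnian

variable {I : Type u} [LinearOrder I] {M : Finset I}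

theorem brunnian_X_of_notMem {m : ℕ} (h : M.card = m) {i : I} (hi : i ∉ M)
    (ω : (brunnian M m h).Ω) : (brunnian M m h).X i ω = (0 : ZMod 2) := by
  simp [brunnian, hi]

theorem brunnian_respects_of_disjoint {m : ℕ} (h : M.card = m) {J1 J2 : Set I}
    (hJ2 : Disjoint J2 M) : (brunnian M m h).Respects J1 J2 := by
  refine RandomFamily.respects_of_dependsOn (fun _ => rfl) (Equiv.refl _) .univ
    (fun _ => dependsOn_univ _) fun x ξ ξ' _ => propext (forall₂_congr fun j hj => ?_)
  have hjM : j ∉ M := Set.disjoint_left.1 hJ2 hj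
  rw [brunnian_X_of_notMem h hjM, brunnian_X_of_notMem h hjM]

variable {n : ℕ} (h : M.card = n + 1)

/-- The sample space of `β_M` is the even-weight code: `ω` is the word `(B_i ω)_{i ∈ M}`
with its last letter deleted. -/
def brunnianWord : (brunnian M (n + 1) h).Ω ≃ {w : Fin (n + 1) → ZMod 2 // ∑ i, w i = 0} :=
  (Fin.zeroSumEquivRemoveNth (ZMod 2) (Fin.last n)).symm

/-- Coordinates on the sample space of `β_M` in which `B_i` is the `k`-th coordinate, where
`i` is the `(p.succAbove k)`-th element of `M`. -/
def brunnianChart (p : Fin (n + 1)) : (Fin n → ZMod 2) ≃ (brunnian M (n + 1) h).Ω :=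
  (Fin.zeroSumEquivRemoveNth (ZMod 2) p).symm.trans (brunnianWord h).symm

theorem brunnian_X_orderIsoOfFin (p : Fin (n + 1)) (ω : (brunnian M (n + 1) h).Ω) :
    (brunnian M (n + 1) h).X (M.orderIsoOfFin h p) ω = (brunnianWord h ω).1 p := by
  -- the sample space is literally `Fin (n + 1 - 1) → ZMod 2`
  revert ω
  change ∀ ω : Fin n → ZMod 2, _
  intro ω
  simp only [brunnian, Finset.coe_mem, dif_pos, Subtype.coe_eta, OrderIso.symm_apply_apply]
  change _ = Fin.insertNth (α := fun _ => ZMod 2) (Fin.last n) (-∑ k, ω k) ω p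
  rw [Fin.insertNth_last']
  cases p using Fin.lastCases with
  | last => simp [ZMod.neg_eq_self_mod_two]
  | cast k => simp [k.isLt]

theorem Finset.exists_orderIsoOfFin_eq {j : I} (hj : j ∈ M) :
    ∃ p, (M.orderIsoOfFin h p : I) = j :=
  ⟨(M.orderIsoOfFin h).symm ⟨j, hj⟩, by simp⟩

theorem Finset.exists_orderIsoOfFin_succAbove_eq (p : Fin (n + 1)) {j : I} (hj : j ∈ M)
    (hjp : j ≠ M.orderIsoOfFin h p) : ∃ k, (M.orderIsoOfFin h (p.succAbove k) : I) = j := by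
  obtain ⟨q, rfl⟩ := M.exists_orderIsoOfFin_eq h hj
  obtain ⟨k, rfl⟩ := Fin.exists_succAbove_eq fun hqp : q = p => hjp (by rw [hqp])
  exact ⟨k, rfl⟩

theorem brunnian_X_brunnianChart (p : Fin (n + 1)) (k : Fin n) (ξ : Fin n → ZMod 2) :
    (brunnian M (n + 1) h).X (M.orderIsoOfFin h (p.succAbove k)) (brunnianChart h p ξ)
      = ξ k := by
  rw [brunnian_X_orderIsoOfFin, brunnianChart, Equiv.trans_apply, Equiv.apply_symm_apply]
  exact congrFun ((Fin.zeroSumEquivRemoveNth (ZMod 2) p).apply_symm_apply ξ) k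

theorem dependsOn_brunnian_event (p : Fin (n + 1)) {J : Set I}
    (hp : (M.orderIsoOfFin h p : I) ∉ J) (x : ∀ i, (brunnian M (n + 1) h).R i) :
    DependsOn (fun ξ => ∀ j ∈ J, (brunnian M (n + 1) h).X j (brunnianChart h p ξ) = x j)
      {k | (M.orderIsoOfFin h (p.succAbove k) : I) ∈ J} := by
  intro ξ ξ' hξ
  refine propext (forall₂_congr fun j hj => ?_)
  by_cases hjM : j ∈ M
  · obtain ⟨k, rfl⟩ := M.exists_orderIsoOfFin_succAbove_eq h p hjM (ne_of_mem_of_not_mem hj hp)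
    rw [brunnian_X_brunnianChart, brunnian_X_brunnianChart, hξ k hj]
  · simp only [brunnian_X_of_notMem h hjM]

theorem brunnian_respects_of_notMem (p : Fin (n + 1)) {J1 J2 : Set I} (hd : Disjoint J1 J2)
    (h1 : (M.orderIsoOfFin h p : I) ∉ J1) (h2 : (M.orderIsoOfFin h p : I) ∉ J2) :
    (brunnian M (n + 1) h).Respects J1 J2 :=
  RandomFamily.respects_of_dependsOn (fun _ => rfl)
    (brunnianChart h p) _
    (dependsOn_brunnian_event h p h1) fun x =>
      (dependsOn_brunnian_event h p h2 x).mono fun _ hk hk1 => hd.ne_of_mem hk1 hk rfl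

theorem brunnian_sum_X (ω : (brunnian M (n + 1) h).Ω) :
    ∑ i ∈ M, ((brunnian M (n + 1) h).X i ω : ZMod 2) = 0 :=
  (Finset.sum_coe_sort M _).symm.trans <| ((M.orderIsoOfFin h).toEquiv.sum_comp _).symm.trans <|
    (Finset.sum_congr rfl fun p _ => brunnian_X_orderIsoOfFin h p ω).trans (brunnianWord h ω).2

theorem brunnian_probEq_coe_eq_zero {x : ∀ i, (brunnian M (n + 1) h).R i}
    (hx : ∑ i ∈ M, (x i : ZMod 2) ≠ 0) :
    (brunnian M (n + 1) h).probEq M x = 0 := by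
  have : IsEmpty {ω // ∀ j ∈ (M : Set I), (brunnian M (n + 1) h).X j ω = x j} :=
    ⟨fun ⟨ω, hω⟩ => hx ((Finset.sum_congr rfl fun i hi => (hω i hi).symm).trans
      (brunnian_sum_X h ω))⟩
  simp [RandomFamily.probEq_eq_card_mul (φ := brunnian M (n + 1) h) (fun _ => rfl)]

theorem brunnian_probEq_pos (p : Fin (n + 1)) {J : Set I} (hJ : J ⊆ M)
    (hp : (M.orderIsoOfFin h p : I) ∉ J) (x : ∀ i, (brunnian M (n + 1) h).R i) :
    0 < (brunnian M (n + 1) h).probEq J x := by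
  have : Nonempty {ω // ∀ j ∈ J, (brunnian M (n + 1) h).X j ω = x j} := by
    refine ⟨⟨brunnianChart h p fun k => x (M.orderIsoOfFin h (p.succAbove k)), fun j hj => ?_⟩⟩
    obtain ⟨k, rfl⟩ :=
      M.exists_orderIsoOfFin_succAbove_eq h p (hJ hj) (ne_of_mem_of_not_mem hj hp)
    exact brunnian_X_brunnianChart h p k _
  rw [RandomFamily.probEq_eq_card_mul (φ := brunnian M (n + 1) h) (fun _ => rfl)]
  exact mul_pos (by exact_mod_cast Nat.card_pos) (inv_pos.2 (pow_pos two_pos _))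

theorem brunnian_coe_mem_Kconn : (M : Set I) ∈ (brunnian M (n + 1) h).Kconn := by
  rintro J1 J2 ⟨⟨a1, ha1⟩, ⟨a2, ha2⟩, hd, hu⟩ hresp
  have hJ1 : J1 ⊆ M := hu ▸ Set.subset_union_left
  have hJ2 : J2 ⊆ M := hu ▸ Set.subset_union_right
  obtain ⟨p1, rfl⟩ := M.exists_orderIsoOfFin_eq h (hJ1 ha1)
  obtain ⟨p2, rfl⟩ := M.exists_orderIsoOfFin_eq h (hJ2 ha2)
  let x : ∀ i, (brunnian M (n + 1) h).R i :=
    Pi.single (M := fun _ => ZMod 2) (M.orderIsoOfFin h p1 : I) 1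
  have hx : ∑ i ∈ M, (x i : ZMod 2) ≠ 0 := by
    change ∑ i ∈ M, Pi.single (M.orderIsoOfFin h p1 : I) (1 : ZMod 2) i ≠ 0
    simp
  have hprod := hresp x
  rw [hu, brunnian_probEq_coe_eq_zero h hx] at hprod
  exact (mul_pos (brunnian_probEq_pos h p2 hJ1 (Set.disjoint_right.1 hd ha2) x)
    (brunnian_probEq_pos h p1 hJ2 (Set.disjoint_left.1 hd ha1) x)).ne hprod

theorem brunnian_Kconn :
    (brunnian M (n + 1) h).Kconn = discreteStructure I ∪ {(M : Set I)} := by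
  refine Set.Subset.antisymm (fun J hJ => ?_) ?_
  · by_contra hJ'
    rw [Set.mem_union, mem_discreteStructure_iff, Set.mem_singleton_iff, not_or] at hJ'
    obtain ⟨hJs, hJM⟩ := hJ'
    by_cases hMJ : (M : Set I) ⊆ J
    · have hM : (M : Set I).Nonempty := Finset.card_pos.1 (h ▸ n.succ_pos)
      have hJM' : (J \ M).Nonempty := Set.sdiff_nonempty.2 fun hJM' => hJM (hJM'.antisymm hMJ)
      exact hJ _ _ (isDissociation_sdiff hMJ hM hJM')
        (brunnian_respects_of_disjoint h Set.disjoint_sdiff_left)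
    · obtain ⟨j, hjM, hjJ⟩ := Set.not_subset.1 hMJ
      obtain ⟨p, rfl⟩ := M.exists_orderIsoOfFin_eq h hjM
      obtain ⟨a, ha, b, hb, hab⟩ := Set.not_subsingleton_iff.1 hJs
      exact hJ _ _ (isDissociation_sdiff (Set.singleton_subset_iff.2 ha) (Set.singleton_nonempty a)
          ⟨b, hb, hab.symm⟩)
        (brunnian_respects_of_notMem h p Set.disjoint_sdiff_right
          (fun hpa => hjJ (Set.mem_singleton_iff.1 hpa ▸ ha)) fun hp => hjJ hp.1)
  · rintro J (hJ | rfl)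
    exacts [RandomFamily.mem_Kconn_of_subsingleton _ (mem_discreteStructure_iff.1 hJ),
      brunnian_coe_mem_Kconn h]

end Brunnian

theorem stmt17_general {I : Type u} [LinearOrder I]
    (M : Finset I) (m : ℕ) (hm : 2 ≤ m) (h : M.card = m) :
    (brunnian M m h).Kconn
        = ({(∅ : Set I)} ∪ {A : Set I | ∃ i : I, A = {i}} ∪ {(M : Set I)}) ∧
    (brunnian M m h).Kconn = generated {(M : Set I)} ∧
    irred (brunnian M m h).Kconn = {(M : Set I)} := by
  obtain ⟨n, rfl⟩ : ∃ n, m = n + 1 := ⟨m - 1, by omega⟩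
  have hK := brunnian_Kconn h
  refine ⟨hK, hK.trans (generated_singleton _).symm, ?_⟩
  rw [hK, irred_discreteStructure_union_singleton]
  rwa [Set.ncard_coe_finset, h]

/-- the connectivity structure of the canonical `M`-brunnian family
consists exactly of `∅`, the singletons, and `M`; i.e. `K_{β_M} = [{M}]`, and `M` is
its unique irreducible connected set of cardinality ≥ 2. -/
theorem stmt17 {I : Type u} [Fintype I] [Nonempty I] [LinearOrder I]
    (M : Finset I) (m : ℕ) (hm : 2 ≤ m) (h : M.card = m) :
    (brunnian M m h).Kconn
        = ({(∅ : Set I)} ∪ {A : Set I | ∃ i : I, A = {i}} ∪ {(M : Set I)}) ∧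
    (brunnian M m h).Kconn = generated {(M : Set I)} ∧
    irred (brunnian M m h).Kconn = {(M : Set I)} :=
  stmt17_general M m hm h
end
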